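/- Let G = (V,E) be a graph and P_G the program from the W[1]-hardness reduction with parameter k. If G has an independent set of size k, then P_G has a sequentially consistent interleaving with at most 3k preemptions. -/

import Mathlib

/-- Memory events: reads and writes of natural-number values to variables of type `V`. -/
inductive Event (V : Type) where
  | read  (x : V) (d : ℕ)
  | write (x : V) (d : ℕ)
deriving DecidableEq

variable {V ι : Type}

/-- A sequence of events is sequentially consistent (SC): every read `r(x,d)` has a
preceding write `w(x,d)` with no write of a different value to `x` in between. -/
def SC (σ : List (Event V)) : Prop :=
  ∀ (p : ℕ) x d, σ[p]? = some (Event.read x d) →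
    ∃ q, q < p ∧ σ[q]? = some (Event.write x d) ∧
      ∀ r, q < r → r < p → ∀ d', d' ≠ d → σ[r]? ≠ some (Event.write x d')

/-- `σ` is an interleaving of the given threads: its restriction to each
thread identifier equals that thread's event sequence. -/
def IsInterleaving [DecidableEq ι] (threads : ι → List (Event V)) (σ : List (ι × Event V)) : Prop :=
  ∀ i, σ.filterMap (fun a => if a.1 = i then some a.2 else none) = threads i

/-- A preemption occurs at position `j`: the events at `j` and `j+1` are from
different threads and the event at `j` is not the last event of its thread. -/
def PreemptionAt (σ : List (ι × Event V)) (j : ℕ) : Prop :=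
  ∃ a b, σ[j]? = some a ∧ σ[j + 1]? = some b ∧ a.1 ≠ b.1 ∧
    ∃ r c, j < r ∧ σ[r]? = some c ∧ c.1 = a.1

open Classical in
/-- The number of preemption positions of `σ`. -/
noncomputable def numPreemptions (σ : List (ι × Event V)) : ℕ :=
  ((Finset.range σ.length).filter fun j => PreemptionAt σ j).card

open Classical in
/-- The number of context switches of `σ` (adjacent events of different threads). -/
noncomputable def numSwitches (σ : List (ι × Event V)) : ℕ :=
  ((Finset.range σ.length).filter fun j =>
    ∃ a b, σ[j]? = some a ∧ σ[j + 1]? = some b ∧ a.1 ≠ b.1).card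

/-- The (increasing) list of positions of `σ` carrying events of thread `i`. -/
def threadPositions [DecidableEq ι] (σ : List (ι × Event V)) (i : ι) : List ℕ :=
  (List.range σ.length).filter fun p => decide ((σ[p]?).map Prod.fst = some i)

/-- The position in `σ` of the `j`-th event of thread `i`. -/
def posOf [DecidableEq ι] (σ : List (ι × Event V)) (i : ι) (j : ℕ) : ℕ :=
  (threadPositions σ i).getD j 0

/-- All events of thread `t` occur before all events of thread `t'` in `σ`. -/
def ThreadBefore [DecidableEq ι] (σ : List (ι × Event V)) (t t' : ι) : Prop :=
  ∀ p ∈ threadPositions σ t, ∀ q ∈ threadPositions σ t', p < q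

/-- The event is a write to variable `x`. -/
def writesTo (x : V) : Event V → Prop
  | Event.write y _ => y = x
  | _ => False

/-- A 1-writer program: for each variable, a single thread performs all writes to it. -/
def OneWriter (threads : ι → List (Event V)) : Prop :=
  ∀ x i i', (∃ e ∈ threads i, writesTo x e) → (∃ e ∈ threads i', writesTo x e) → i = i'

/-- The events of thread `i` from its index `s` onwards appear contiguously in `σ`. -/
def ContiguousFrom [DecidableEq ι] (σ : List (ι × Event V)) (i : ι) (s : ℕ) : Prop :=
  ∀ j, s ≤ j → j + 1 < (threadPositions σ i).length → posOf σ i (j + 1) = posOf σ i j + 1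

/-- Conflict-graph edge `tr → tw` between outer blocks (suffixes of the threads
starting at indices `s tr`, `s tw`): the last write to some variable `x` in the
outer block of `tw` conflicts with a read of `x` in the outer block of `tr`. -/
def ConflictEdge [DecidableEq ι] (threads : ι → List (Event V)) (s : ι → ℕ) (tr tw : ι) : Prop :=
  tr ≠ tw ∧ ∃ x d d' jr jw, d ≠ d' ∧
    s tr ≤ jr ∧ (threads tr)[jr]? = some (Event.read x d) ∧
    s tw ≤ jw ∧ (threads tw)[jw]? = some (Event.write x d') ∧
    ∀ j d'', jw < j → (threads tw)[j]? ≠ some (Event.write x d'')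

/-- Splitting a list into contiguous blocks immediately after each position in `cut`. -/
def splitAtCuts {α : Type} (l : List α) (cut : Finset ℕ) : List (List α) :=
  let cs := cut.sort (· ≤ ·)
  ((0 :: cs.map (· + 1)).zip (cs.map (· + 1) ++ [l.length])).map fun p => (l.take p.2).drop p.1


/-- Variables of the W[1]-hardness reduction program `P_G`. -/
inductive GVar (α : Type) (k : ℕ) where
  | y (e : Sym2 α)
  | x (j : Fin k)
  | s
  | p (j : ℕ)
deriving DecidableEq

/-- Thread identifiers of `P_G`. -/
inductive GTId (k : ℕ) where
  | init
  | checker (j : Fin k)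
  | sel (j : Fin k)
deriving DecidableEq

variable {α : Type} [Fintype α] [DecidableEq α]

/-- The list of edges of `G` incident on `v`. -/
noncomputable def incEdges (G : SimpleGraph α) [DecidableRel G.Adj] (v : α) : List (Sym2 α) :=
  (G.edgeFinset.filter fun e => v ∈ e).toList

/-- The `Init` thread of `P_G`. -/
noncomputable def initThread (G : SimpleGraph α) [DecidableRel G.Adj] (k : ℕ) :
    List (Event (GVar α k)) :=
  (G.edgeFinset.toList.map fun e => Event.write (GVar.y e) 0) ++
  ((List.finRange k).map fun j => Event.write (GVar.x j) 1) ++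
  [Event.write GVar.s 1, Event.write (GVar.p 0) 1]

/-- The thread `Checker_j` of `P_G`. -/
def checkerThread {k : ℕ} (j : Fin k) : List (Event (GVar α k)) :=
  [Event.read (GVar.p j.val) 1] ++
  (if j.val + 1 ≠ k then [Event.write GVar.s 0] else []) ++
  [Event.read (GVar.x j) 0] ++
  (if j.val + 1 = k then [Event.write GVar.s 1] else []) ++
  [Event.write (GVar.p (j.val + 1)) 1]

/-- The block `B_v^j` of selector thread `Sel_j` for vertex `v`. -/
noncomputable def selBlock (G : SimpleGraph α) [DecidableRel G.Adj] {k : ℕ} (j : Fin k) (v : α) :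
    List (Event (GVar α k)) :=
  ((incEdges G v).flatMap fun e => [Event.read (GVar.y e) 0, Event.write (GVar.y e) (j.val + 1)]) ++
  [Event.read GVar.s 1, Event.write (GVar.x j) 0, Event.write (GVar.x j) 1] ++
  ((incEdges G v).flatMap fun e => [Event.read (GVar.y e) (j.val + 1), Event.write (GVar.y e) 0])

/-- The selector thread `Sel_j` of `P_G`: one block per vertex of `G`. -/
noncomputable def selThread (G : SimpleGraph α) [DecidableRel G.Adj] {k : ℕ} (j : Fin k) :
    List (Event (GVar α k)) :=
  (Finset.univ : Finset α).toList.flatMap (selBlock G j)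

/-- The program `P_G` of the W[1]-hardness reduction with parameter `k`. -/
noncomputable def pgThreads (G : SimpleGraph α) [DecidableRel G.Adj] (k : ℕ) :
    GTId k → List (Event (GVar α k))
  | GTId.init => initThread G k
  | GTId.checker j => checkerThread j
  | GTId.sel j => selThread G j

/-!
Enumerate the independent set as `v 0, …, v (k-1)`. Each selector `Sel_j` runs its blocks before
`B_{v j}`, then `B_{v j}` up to `w(x_j,0)`, and stops. As the `v j` are pairwise non-adjacent, the
edges they claim (`y_e := j+1`) are pairwise disjoint sets, so every `r(y_e,0)` succeeds. Now all
`x_j = 0`, and the checkers run to completion one after the other, the last one restoring `s = 1`.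
Finally each selector finishes `B_{v j}`, which restores `y_e = 0` and `x_j = 1`, and runs its
remaining blocks. Only selectors are preempted, each at most three times: before `B_{v j}`, after
`w(x_j,0)` and after `B_{v j}`.
-/

@[simp] theorem flatMap_const_nil {β γ : Type} (l : List β) :
    (l.flatMap fun _ => ([] : List γ)) = [] :=
  List.flatMap_eq_nil_iff.mpr fun _ _ => rfl

theorem flatMap_ite_eq_of_mem {β γ : Type} [DecidableEq β] {l : List β} (hl : l.Nodup) {b : β}
    (hb : b ∈ l) (c : β → List γ) : (l.flatMap fun a => if a = b then c a else []) = c b := by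
  induction l with
  | nil => simp at hb
  | cons a l ih =>
    rw [List.nodup_cons] at hl
    by_cases hab : a = b
    · subst hab
      have hrest : (l.flatMap fun x => if x = a then c x else []) = [] :=
        List.flatMap_eq_nil_iff.mpr fun x hx => if_neg fun hxa => hl.1 (by rwa [hxa] at hx)
      simp [hrest]
    · simp [hab, ih hl.2 ((List.mem_cons.mp hb).resolve_left (Ne.symm hab))]

namespace Event

variable [DecidableEq V]

abbrev Store (V : Type) := V → Option ℕ

def exec (m : Store V) : List (Event V) → Option (Store V)
  | [] => some m
  | read x d :: σ => if m x = some d then exec m σ else none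
  | write x d :: σ => exec (Function.update m x (some d)) σ

@[simp] theorem exec_nil (m : Store V) : exec m [] = some m := rfl

theorem exec_read_cons {m : Store V} {x : V} {d : ℕ} (h : m x = some d) (σ : List (Event V)) :
    exec m (read x d :: σ) = exec m σ := by
  simp [exec, h]

@[simp] theorem exec_write_cons (m : Store V) (x : V) (d : ℕ) (σ : List (Event V)) :
    exec m (write x d :: σ) = exec (Function.update m x (some d)) σ := rfl

theorem eq_some_of_exec_read_cons {m m' : Store V} {x : V} {d : ℕ} {σ : List (Event V)}
    (h : exec m (read x d :: σ) = some m') : m x = some d := by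
  by_contra hx
  simp [exec, hx] at h

theorem exec_append (m : Store V) (σ τ : List (Event V)) :
    exec m (σ ++ τ) = (exec m σ).bind (exec · τ) := by
  induction σ generalizing m with
  | nil => rfl
  | cons e σ ih =>
    cases e with
    | read x d => by_cases hx : m x = some d <;> simp [exec, hx, ih]
    | write x d => simp [ih]

theorem exec_append_of_eq_some {m m₁ m₂ : Store V} {σ τ : List (Event V)}
    (h₁ : exec m σ = some m₁) (h₂ : exec m₁ τ = some m₂) :
    exec m (σ ++ τ) = some m₂ := by
  rw [exec_append, h₁]
  exact h₂

theorem exists_exec_take_of_getElem?_eq_read {m m' : Store V} {σ : List (Event V)}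
    (h : exec m σ = some m') {p : ℕ} {x : V} {d : ℕ} (hp : σ[p]? = some (read x d)) :
    ∃ mp, exec m (σ.take p) = some mp ∧ mp x = some d := by
  obtain ⟨hlt, hget⟩ := List.getElem?_eq_some_iff.mp hp
  have hsplit : σ = σ.take p ++ read x d :: σ.drop (p + 1) := by
    rw [← hget, ← List.drop_eq_getElem_cons hlt, List.take_append_drop]
  rw [hsplit, exec_append] at h
  cases hmp : exec m (σ.take p) with
  | none => simp [hmp] at h
  | some mp =>
    rw [hmp, Option.bind_some] at h
    exact ⟨mp, rfl, eq_some_of_exec_read_cons h⟩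

theorem exec_singleton_apply_of_ne_write {m m' : Store V} {e : Event V} (h : exec m [e] = some m')
    {x : V} (he : ∀ d, e ≠ write x d) : m' x = m x := by
  cases e with
  | read y d =>
    rw [exec_read_cons (eq_some_of_exec_read_cons h), exec_nil, Option.some_inj] at h
    rw [h]
  | write y d =>
    have hyx : x ≠ y := fun hxy => he d (by rw [hxy])
    rw [exec_write_cons, exec_nil, Option.some_inj] at h
    rw [← h, Function.update_of_ne hyx]

theorem exists_last_write_of_exec {τ : List (Event V)} {m : Store V}
    (h : exec (fun _ => none) τ = some m) {x : V} {d : ℕ} (hx : m x = some d) :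
    ∃ q < τ.length, τ[q]? = some (write x d) ∧
      ∀ r, q < r → r < τ.length → ∀ d', τ[r]? ≠ some (write x d') := by
  induction τ using List.reverseRecOn generalizing m with
  | nil => simp at h; simp [← h] at hx
  | append_singleton τ e ih =>
    rw [exec_append] at h
    obtain ⟨m₁, h₁, he⟩ := Option.bind_eq_some_iff.mp h
    by_cases hw : ∃ d', e = write x d'
    · obtain ⟨d', rfl⟩ := hw
      rw [exec_write_cons, exec_nil, Option.some_inj] at he
      rw [← he, Function.update_self] at hx
      refine ⟨τ.length, by simp, by simpa using hx, fun r hqr hr => by simp at hr; omega⟩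
    · simp only [not_exists] at hw
      obtain ⟨q, hq, hqw, hlast⟩ :=
        ih h₁ (by rwa [← exec_singleton_apply_of_ne_write he hw])
      refine ⟨q, by simp; omega, by rwa [List.getElem?_append_left hq], fun r hqr hr d' => ?_⟩
      rcases Nat.lt_or_ge r τ.length with hrτ | hrτ
      · rw [List.getElem?_append_left hrτ]
        exact hlast r hqr hrτ d'
      · simp at hr
        rw [show r = τ.length by omega, List.getElem?_concat_length]
        exact fun hcon => hw d' (Option.some_inj.mp hcon)

theorem _root_.SC.of_exec {σ : List (Event V)} {m : Store V}
    (h : exec (fun _ => none) σ = some m) : SC σ := by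
  intro p x d hp
  obtain ⟨mp, hmp, hx⟩ := exists_exec_take_of_getElem?_eq_read h hp
  have hp_lt : p < σ.length := (List.getElem?_eq_some_iff.mp hp).1
  obtain ⟨q, hq, hqw, hlast⟩ := exists_last_write_of_exec hmp hx
  have htake : ∀ r < p, (σ.take p)[r]? = σ[r]? := fun r hr => List.getElem?_take_of_lt hr
  have hlen : (σ.take p).length = p := by simp; omega
  rw [hlen] at hq hlast
  exact ⟨q, hq, by rwa [← htake q hq], fun r hqr hrp d' _ => by
    rw [← htake r hrp]; exact hlast r hqr hrp d'⟩

theorem exec_map_write {β : Type} (f : β → V) (d : ℕ) (l : List β) (m : Store V) :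
    exec m (l.map fun a => write (f a) d) =
      some fun z => if z ∈ l.map f then some d else m z := by
  induction l generalizing m with
  | nil => simp
  | cons a l ih =>
    rw [List.map_cons, exec_write_cons, ih]
    congr 1
    funext z
    by_cases hz : z = f a <;> simp [hz]

theorem exec_flatMap_read_write {β : Type} (f : β → V) (d₁ d₂ : ℕ) {l : List β}
    (hl : (l.map f).Nodup) {m : Store V} (hm : ∀ a ∈ l, m (f a) = some d₁) :
    exec m (l.flatMap fun a => [read (f a) d₁, write (f a) d₂]) =
      some fun z => if z ∈ l.map f then some d₂ else m z := by
  induction l generalizing m with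
  | nil => simp
  | cons a l ih =>
    rw [List.map_cons, List.nodup_cons] at hl
    rw [List.flatMap_cons, List.cons_append, exec_read_cons (hm a List.mem_cons_self),
      List.cons_append, List.nil_append, exec_write_cons, ih hl.2]
    · congr 1
      funext z
      by_cases hz : z = f a <;> simp [hz]
    · intro b hb
      have hba : f b ≠ f a := fun h => hl.1 (h ▸ List.mem_map_of_mem hb)
      rw [Function.update_of_ne hba]
      exact hm b (List.mem_cons_of_mem _ hb)

theorem exec_flatMap_of_forall_eq_self {β : Type} (g : β → List (Event V)) {m : Store V}
    {l : List β} (h : ∀ b ∈ l, exec m (g b) = some m) : exec m (l.flatMap g) = some m := by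
  induction l with
  | nil => rfl
  | cons b l ih =>
    exact exec_append_of_eq_some (h b List.mem_cons_self)
      (ih fun b' hb' => h b' (List.mem_cons_of_mem _ hb'))

theorem exists_exec_flatMap_finRange {n : ℕ} (P : ℕ → Store V → Prop)
    (f : Fin n → List (Event V))
    (hstep : ∀ (t : Fin n) m, P t m → ∃ m', exec m (f t) = some m' ∧ P (t + 1) m')
    {m : Store V} (h₀ : P 0 m) :
    ∃ m', exec m ((List.finRange n).flatMap f) = some m' ∧ P n m' := by
  induction n with
  | zero => exact ⟨m, rfl, h₀⟩
  | succ n ih =>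
    obtain ⟨m₁, h₁, hP₁⟩ := ih (f ∘ Fin.castSucc) (fun t => hstep t.castSucc)
    obtain ⟨m₂, h₂, hP₂⟩ := hstep (Fin.last n) m₁ hP₁
    refine ⟨m₂, ?_, hP₂⟩
    rw [List.finRange_succ_last, List.flatMap_append, List.flatMap_map, List.flatMap_singleton]
    exact exec_append_of_eq_some h₁ h₂

end Event

def flattenPieces (P : List (ι × List (Event V))) : List (ι × Event V) :=
  P.flatMap fun p => p.2.map (p.1, ·)

@[simp] theorem flattenPieces_cons (p : ι × List (Event V)) (P : List (ι × List (Event V))) :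
    flattenPieces (p :: P) = p.2.map (p.1, ·) ++ flattenPieces P := rfl

theorem map_snd_flattenPieces (P : List (ι × List (Event V))) :
    (flattenPieces P).map Prod.snd = P.flatMap Prod.snd := by
  induction P with
  | nil => rfl
  | cons p P ih => simp [ih, Function.comp_def]

theorem preemptionAt_of_append_length_add {σ₁ σ₂ : List (ι × Event V)} {j : ℕ}
    (h : PreemptionAt (σ₁ ++ σ₂) (σ₁.length + j)) : PreemptionAt σ₂ j := by
  obtain ⟨a, b, ha, hb, hab, r, c, hr, hc, hca⟩ := h
  have hshift : ∀ n, (σ₁ ++ σ₂)[σ₁.length + n]? = σ₂[n]? := fun n => by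
    rw [List.getElem?_append_right (by omega), Nat.add_sub_cancel_left]
  refine ⟨a, b, by rwa [← hshift], by rwa [← hshift, ← Nat.add_assoc], hab,
    r - σ₁.length, c, by omega, ?_, hca⟩
  rwa [← hshift, Nat.add_sub_cancel' (by omega)]

theorem numPreemptions_append_le (σ₁ σ₂ : List (ι × Event V)) (S : Finset ℕ)
    (hS : ∀ j < σ₁.length, PreemptionAt (σ₁ ++ σ₂) j → j ∈ S) :
    numPreemptions (σ₁ ++ σ₂) ≤ S.card + numPreemptions σ₂ := by
  classical
  let T := (Finset.range σ₂.length).filter (PreemptionAt σ₂)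
  calc numPreemptions (σ₁ ++ σ₂) ≤ (S ∪ T.image (σ₁.length + ·)).card := by
        refine Finset.card_le_card fun j hj => ?_
        obtain ⟨hj, hpre⟩ := Finset.mem_filter.mp hj
        rw [Finset.mem_range, List.length_append] at hj
        rcases Nat.lt_or_ge j σ₁.length with hj₁ | hj₁
        · exact Finset.mem_union_left _ (hS j hj₁ hpre)
        · refine Finset.mem_union_right _
            (Finset.mem_image.mpr ⟨j - σ₁.length, ?_, by omega⟩)
          rw [← Nat.add_sub_cancel' hj₁] at hpre
          exact Finset.mem_filter.mpr ⟨Finset.mem_range.mpr (by omega),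
            preemptionAt_of_append_length_add hpre⟩
    _ ≤ S.card + T.card :=
        (Finset.card_union_le S _).trans (Nat.add_le_add_left Finset.card_image_le _)
    _ = S.card + numPreemptions σ₂ := by unfold numPreemptions; congr

section Cost

variable [DecidableEq ι]

def pieceCost : List (ι × List (Event V)) → ℕ
  | [] => 0
  | p :: P => (if p.1 ∈ P.map Prod.fst then 1 else 0) + pieceCost P

theorem isInterleaving_flattenPieces (threads : ι → List (Event V))
    (P : List (ι × List (Event V)))
    (h : ∀ i, (P.flatMap fun p => if p.1 = i then p.2 else []) = threads i) :
    IsInterleaving threads (flattenPieces P) := by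
  intro i
  rw [← h i]
  clear h
  induction P with
  | nil => rfl
  | cons p P ih => by_cases hp : p.1 = i <;> simp [hp, ih, List.filterMap_map]

/-- A piece can only be preempted at its last event, and only if its thread runs again later. -/
theorem numPreemptions_map_append_le (i : ι) (es : List (Event V)) (τ : List (ι × Event V)) :
    numPreemptions (es.map (i, ·) ++ τ) ≤
      (if i ∈ τ.map Prod.fst then 1 else 0) + numPreemptions τ := by
  have hfst : ∀ n a, n < es.length → (es.map (i, ·) ++ τ)[n]? = some a → a.1 = i := by
    intro n a hn ha
    rw [List.getElem?_append_left (by simpa using hn)] at ha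
    simp only [List.getElem?_map, Option.map_eq_some_iff] at ha
    obtain ⟨e, -, rfl⟩ := ha
    rfl
  refine (numPreemptions_append_le _ τ (if i ∈ τ.map Prod.fst then {es.length - 1} else ∅)
    fun j hj hpre => ?_).trans (by split_ifs <;> simp)
  obtain ⟨a, b, ha, hb, hab, r, c, hr, hc, hca⟩ := hpre
  rw [List.length_map] at hj
  have hai := hfst j a hj ha
  have hlast : j + 1 = es.length := by
    by_contra hne
    exact hab (by rw [hai, hfst (j + 1) b (by omega) hb])
  have hrτ : τ[r - es.length]? = some c := by
    rwa [List.getElem?_append_right (by simp; omega), List.length_map] at hc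
  rw [if_pos (List.mem_map.mpr ⟨c, List.mem_of_getElem? hrτ, by rw [hca, hai]⟩)]
  exact Finset.mem_singleton.mpr (by omega)

theorem numPreemptions_flattenPieces_le (P : List (ι × List (Event V))) :
    numPreemptions (flattenPieces P) ≤ pieceCost P := by
  induction P with
  | nil => exact Nat.le_of_eq rfl
  | cons p P ih =>
    refine (numPreemptions_map_append_le p.1 p.2 _).trans (Nat.add_le_add ?_ ih)
    have hsub : (flattenPieces P).map Prod.fst ⊆ P.map Prod.fst := by
      intro i hi
      simp only [flattenPieces, List.mem_map, List.mem_flatMap] at hi ⊢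
      obtain ⟨_, ⟨q, hq, e, -, rfl⟩, rfl⟩ := hi
      exact ⟨q, hq, rfl⟩
    split_ifs with h₁ h₂ <;> first | omega | exact absurd (hsub h₁) h₂

theorem pieceCost_append_le (P Q : List (ι × List (Event V))) :
    pieceCost (P ++ Q) ≤ P.length + pieceCost Q := by
  induction P with
  | nil => simp
  | cons p P ih =>
    simp only [List.cons_append, pieceCost, List.length_cons]
    split_ifs <;> omega

theorem pieceCost_append_of_disjoint {P : List (ι × List (Event V))}
    (Q : List (ι × List (Event V)))
    (hP : (P.map Prod.fst).Nodup) (hPQ : ∀ p ∈ P, p.1 ∉ Q.map Prod.fst) :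
    pieceCost (P ++ Q) = pieceCost Q := by
  induction P with
  | nil => rfl
  | cons p P ih =>
    rw [List.map_cons, List.nodup_cons] at hP
    rw [List.cons_append, pieceCost, ih hP.2 fun q hq => hPQ q (List.mem_cons_of_mem _ hq),
      if_neg, Nat.zero_add]
    rw [List.map_append, List.mem_append, not_or]
    exact ⟨hP.1, hPQ p List.mem_cons_self⟩

end Cost

def finPieces {k : ℕ} (t : Fin k → ι) (c : Fin k → List (Event V)) :
    List (ι × List (Event V)) :=
  (List.finRange k).map fun j => (t j, c j)

@[simp] theorem length_finPieces {k : ℕ} (t : Fin k → ι) (c : Fin k → List (Event V)) :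
    (finPieces t c).length = k := by
  simp [finPieces]

theorem nodup_map_fst_finPieces {k : ℕ} {t : Fin k → ι} (ht : Function.Injective t)
    (c : Fin k → List (Event V)) : ((finPieces t c).map Prod.fst).Nodup := by
  simpa [finPieces, Function.comp_def] using (List.nodup_finRange k).map ht

section Reduction

open Event

variable {G : SimpleGraph α} [DecidableRel G.Adj] {k : ℕ}

theorem mem_incEdges {e : Sym2 α} {w : α} :
    e ∈ incEdges G w ↔ e ∈ G.edgeFinset ∧ w ∈ e := by
  rw [incEdges, Finset.mem_toList, Finset.mem_filter]

theorem nodup_map_y_incEdges (w : α) : ((incEdges G w).map (GVar.y (k := k))).Nodup :=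
  (Finset.nodup_toList _).map fun _ _ h => GVar.y.inj h

theorem incEdges_disjoint {v w : α} (hvw : v ≠ w) (hadj : ¬ G.Adj v w) :
    (incEdges G v).Disjoint (incEdges G w) := by
  intro e hv hw
  obtain ⟨he, hve⟩ := mem_incEdges.mp hv
  rw [(Sym2.mem_and_mem_iff hvw).mp ⟨hve, (mem_incEdges.mp hw).2⟩, SimpleGraph.mem_edgeFinset,
    SimpleGraph.mem_edgeSet] at he
  exact hadj he

variable (G) in
noncomputable def selStart (j : Fin k) (w : α) : List (Event (GVar α k)) :=
  ((incEdges G w).flatMap fun e => [Event.read (GVar.y e) 0, Event.write (GVar.y e) (j.val + 1)]) ++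
  [Event.read GVar.s 1, Event.write (GVar.x j) 0]

variable (G) in
noncomputable def selFinish (j : Fin k) (w : α) : List (Event (GVar α k)) :=
  Event.write (GVar.x j) 1 ::
  ((incEdges G w).flatMap fun e => [Event.read (GVar.y e) (j.val + 1), Event.write (GVar.y e) 0])

theorem selBlock_eq_append (j : Fin k) (w : α) :
    selBlock G j w = selStart G j w ++ selFinish G j w := by
  simp [selBlock, selStart, selFinish]

theorem exec_selStart {m : Store (GVar α k)} (j : Fin k) (w : α) (hs : m GVar.s = some 1)
    (hy : ∀ e ∈ incEdges G w, m (GVar.y e) = some 0) :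
    exec m (selStart G j w) = some (Function.update
      (fun z => if z ∈ (incEdges G w).map GVar.y then some (j.val + 1) else m z)
      (GVar.x j) (some 0)) :=
  exec_append_of_eq_some (exec_flatMap_read_write _ _ _ (nodup_map_y_incEdges w) hy) <| by
    rw [exec_read_cons (by simp [hs]), exec_write_cons, exec_nil]

theorem exec_selFinish {m : Store (GVar α k)} (j : Fin k) (w : α)
    (hy : ∀ e ∈ incEdges G w, m (GVar.y e) = some (j.val + 1)) :
    exec m (selFinish G j w) = some fun z =>
      if z ∈ (incEdges G w).map GVar.y then some 0
      else Function.update m (GVar.x j) (some 1) z := by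
  rw [selFinish, exec_write_cons]
  exact exec_flatMap_read_write _ _ _ (nodup_map_y_incEdges w) fun e he => by simp [hy e he]

theorem exec_selBlock {m : Store (GVar α k)} (j : Fin k) (w : α) (hs : m GVar.s = some 1)
    (hx : m (GVar.x j) = some 1) (hy : ∀ e ∈ incEdges G w, m (GVar.y e) = some 0) :
    exec m (selBlock G j w) = some m := by
  rw [selBlock_eq_append, exec_append_of_eq_some (exec_selStart j w hs hy)
    (exec_selFinish j w fun e he => by simp [he])]
  congr 1
  funext z
  by_cases hz : z ∈ (incEdges G w).map GVar.y
  · obtain ⟨e, he, rfl⟩ := List.mem_map.mp hz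
    simp [he, hy e he]
  · by_cases hzx : z = GVar.x j
    · simp [hzx, hx]
    · simp only [if_neg hz, Function.update_of_ne hzx]

/-- `active j`: selector `j` has run `selStart` but not `selFinish` on its vertex `v j`, and so
owns the edges at `v j`. -/
structure StoreInv (G : SimpleGraph α) [DecidableRel G.Adj] (v : Fin k → α) (sv : ℕ)
    (xv : Fin k → ℕ) (pmax : ℕ) (active : Fin k → Prop) (m : Store (GVar α k)) : Prop where
  s_eq : m GVar.s = some sv
  x_eq : ∀ j, m (GVar.x j) = some (xv j)
  p_eq : ∀ n, m (GVar.p n) = if n ≤ pmax then some 1 else none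
  y_active : ∀ j, active j → ∀ e ∈ incEdges G (v j), m (GVar.y e) = some (j.val + 1)
  y_idle : ∀ e ∈ G.edgeFinset, (∀ j, active j → e ∉ incEdges G (v j)) →
    m (GVar.y e) = some 0

variable (G) in
theorem exists_exec_initThread (v : Fin k → α) :
    ∃ m, exec (fun _ => none) (initThread G k) = some m ∧
      StoreInv G v 1 (fun _ => 1) 0 (fun _ => False) m := by
  refine ⟨_, exec_append_of_eq_some (exec_append_of_eq_some
    (exec_map_write GVar.y 0 G.edgeFinset.toList _) (exec_map_write GVar.x 1 _ _)) rfl, ?_⟩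
  constructor
  · simp
  · simp
  · intro n
    by_cases hn : n = 0 <;> simp [hn]
  · simp
  · intro e he _
    simpa using he

theorem exec_selBlocks_of_storeInv {v : Fin k → α} {pmax : ℕ} {m : Store (GVar α k)}
    (h : StoreInv G v 1 (fun _ => 1) pmax (fun _ => False) m) (j : Fin k) (ws : List α) :
    exec m (ws.flatMap (selBlock G j)) = some m :=
  exec_flatMap_of_forall_eq_self _ fun w _ => exec_selBlock j w h.s_eq (h.x_eq j)
    fun e he => h.y_idle e (mem_incEdges.mp he).1 fun _ hj => hj.elim

variable {v : Fin k → α} {m : Store (GVar α k)}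

theorem StoreInv.exists_exec_selStart
    (hdis : Pairwise fun i j => (incEdges G (v i)).Disjoint (incEdges G (v j))) (t : Fin k)
    (h : StoreInv G v 1 (fun j => if j.val < t then 0 else 1) 0 (fun j => j.val < t) m) :
    ∃ m', exec m (selStart G t (v t)) = some m' ∧
      StoreInv G v 1 (fun j => if j.val < t + 1 then 0 else 1) 0 (fun j => j.val < t + 1) m' := by
  have hown : ∀ e ∈ incEdges G (v t), m (GVar.y e) = some 0 := fun e he =>
    h.y_idle e (mem_incEdges.mp he).1 fun j hj hej => hdis (Fin.ne_of_lt hj) hej he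
  refine ⟨_, exec_selStart t (v t) h.s_eq hown, ⟨?_, ?_, ?_, ?_, ?_⟩⟩
  · simp [h.s_eq]
  · intro j
    by_cases hjt : j = t
    · simp [hjt]
    · have := Fin.val_ne_of_ne hjt
      simp only [Function.update_of_ne (GVar.x.inj.mt hjt), List.mem_map, reduceCtorEq, and_false,
        exists_false, if_false, h.x_eq]
      split_ifs <;> first | rfl | omega
  · simp [h.p_eq]
  · intro j hj e he
    by_cases hjt : j = t
    · subst hjt
      simp [he]
    · have hjt' : j.val < t := by have := Fin.val_ne_of_ne hjt; omega
      have het : e ∉ incEdges G (v t) := fun het => hdis hjt he het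
      simp [het, h.y_active j hjt' e he]
  · intro e he hno
    have het : e ∉ incEdges G (v t) := hno t (by omega)
    simp [het, h.y_idle e he fun j hj => hno j (by omega)]

theorem StoreInv.exists_exec_checkerThread (t : Fin k)
    (h : StoreInv G v (if t.val = 0 ∨ t.val = k then 1 else 0) (fun _ => 0) t (fun _ => True) m) :
    ∃ m', exec m (checkerThread t) = some m' ∧
      StoreInv G v (if t.val + 1 = 0 ∨ t.val + 1 = k then 1 else 0) (fun _ => 0) (t + 1)
        (fun _ => True) m' := by
  refine ⟨Function.update (Function.update m GVar.s (some (if t.val + 1 = k then 1 else 0)))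
    (GVar.p (t + 1)) (some 1), ?_, ⟨?_, ?_, ?_, ?_, ?_⟩⟩
  · by_cases hk : t.val + 1 = k <;> simp [checkerThread, hk, exec, h.p_eq, h.x_eq]
  · simp
  · simp [h.x_eq]
  · intro n
    by_cases hn : n = t + 1
    · simp [hn]
    · simp only [Function.update_apply, reduceCtorEq, if_false, GVar.p.injEq, hn, h.p_eq]
      split_ifs <;> first | rfl | omega
  · intro j _ e he
    simpa using h.y_active j trivial e he
  · intro e he hno
    simp [h.y_idle e he hno]

theorem StoreInv.exists_exec_selFinish
    (hdis : Pairwise fun i j => (incEdges G (v i)).Disjoint (incEdges G (v j))) (t : Fin k)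
    (h : StoreInv G v 1 (fun j => if j.val < t then 1 else 0) k (fun j => t ≤ j.val) m) :
    ∃ m', exec m (selFinish G t (v t)) = some m' ∧
      StoreInv G v 1 (fun j => if j.val < t + 1 then 1 else 0) k (fun j => t + 1 ≤ j.val) m' := by
  refine ⟨_, exec_selFinish t (v t) (h.y_active t le_rfl), ⟨?_, ?_, ?_, ?_, ?_⟩⟩
  · simp [h.s_eq]
  · intro j
    by_cases hjt : j = t
    · simp [hjt]
    · have := Fin.val_ne_of_ne hjt
      simp only [List.mem_map, reduceCtorEq, and_false, exists_false, if_false,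
        Function.update_of_ne (GVar.x.inj.mt hjt), h.x_eq]
      split_ifs <;> first | rfl | omega
  · simp [h.p_eq]
  · intro j hj e he
    have het : e ∉ incEdges G (v t) := fun het => hdis (Fin.ne_of_gt hj) he het
    simp [het, h.y_active j (by omega) e he]
  · intro e he hno
    by_cases het : e ∈ incEdges G (v t)
    · simp [het]
    · have hy : m (GVar.y e) = some 0 := h.y_idle e he fun j hj => by
        by_cases hjt : j = t
        · exact hjt ▸ het
        · exact hno j (by have := Fin.val_ne_of_ne hjt; omega)
      simp [het, hy]

variable (G) in
noncomputable def reductionSchedule (v : Fin k → α) (pre post : Fin k → List α) :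
    List (GTId k × List (Event (GVar α k))) :=
  (GTId.init, initThread G k) ::
    (finPieces GTId.sel (fun j => (pre j).flatMap (selBlock G j)) ++
    (finPieces GTId.sel (fun j => selStart G j (v j)) ++
    (finPieces GTId.checker checkerThread ++
    (finPieces GTId.sel (fun j => selFinish G j (v j)) ++
    finPieces GTId.sel fun j => (post j).flatMap (selBlock G j)))))

theorem isInterleaving_reductionSchedule {pre post : Fin k → List α}
    (hsplit : ∀ j, (Finset.univ : Finset α).toList = pre j ++ v j :: post j) :
    IsInterleaving (pgThreads G k) (flattenPieces (reductionSchedule G v pre post)) := by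
  refine isInterleaving_flattenPieces _ _ fun i => ?_
  cases i with
  | init => simp [reductionSchedule, finPieces, List.flatMap_map, pgThreads]
  | checker j =>
    simp [reductionSchedule, finPieces, List.flatMap_map, pgThreads,
      flatMap_ite_eq_of_mem (List.nodup_finRange k) (List.mem_finRange j)]
  | sel j =>
    simp [reductionSchedule, finPieces, List.flatMap_map, pgThreads, selThread, hsplit j,
      selBlock_eq_append, flatMap_ite_eq_of_mem (List.nodup_finRange k) (List.mem_finRange j)]

theorem sc_reductionSchedule
    (hdis : Pairwise fun i j => (incEdges G (v i)).Disjoint (incEdges G (v j)))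
    (pre post : Fin k → List α) :
    SC ((flattenPieces (reductionSchedule G v pre post)).map Prod.snd) := by
  obtain ⟨m₀, h₀, hinv₀⟩ := exists_exec_initThread G v
  obtain ⟨m₁, h₁, hinv₁⟩ := exists_exec_flatMap_finRange
    (fun t m => StoreInv G v 1 (fun j => if j.val < t then 0 else 1) 0 (fun j => j.val < t) m)
    _ (fun t _ => StoreInv.exists_exec_selStart hdis t) (by simpa using hinv₀)
  obtain ⟨m₂, h₂, hinv₂⟩ := exists_exec_flatMap_finRange
    (fun t m => StoreInv G v (if t = 0 ∨ t = k then 1 else 0) (fun _ => 0) t (fun _ => True) m)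
    _ (fun t _ => StoreInv.exists_exec_checkerThread t) (by simpa using hinv₁)
  obtain ⟨m₃, h₃, hinv₃⟩ := exists_exec_flatMap_finRange
    (fun t m => StoreInv G v 1 (fun j => if j.val < t then 1 else 0) k (fun j => t ≤ j.val) m)
    _ (fun t _ => StoreInv.exists_exec_selFinish hdis t) (by simpa using hinv₂)
  replace hinv₃ : StoreInv G v 1 (fun _ => 1) k (fun _ => False) m₃ := by
    simpa [Nat.not_le.mpr (Fin.is_lt _)] using hinv₃
  have hblocks (m : Store (GVar α k)) (pmax : ℕ)
      (h : StoreInv G v 1 (fun _ => 1) pmax (fun _ => False) m) (ws : Fin k → List α) :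
      exec m ((List.finRange k).flatMap fun j => (ws j).flatMap (selBlock G j)) = some m :=
    exec_flatMap_of_forall_eq_self _ fun j _ => exec_selBlocks_of_storeInv h j (ws j)
  rw [map_snd_flattenPieces]
  simp only [reductionSchedule, finPieces, List.flatMap_cons, List.flatMap_append,
    List.flatMap_map]
  exact SC.of_exec <| exec_append_of_eq_some h₀ <|
    exec_append_of_eq_some (hblocks _ _ hinv₀ pre) <| exec_append_of_eq_some h₁ <|
    exec_append_of_eq_some h₂ <| exec_append_of_eq_some h₃ <| hblocks _ _ hinv₃ post

theorem pieceCost_reductionSchedule_le (pre post : Fin k → List α) :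
    pieceCost (reductionSchedule G v pre post) ≤ 3 * k := by
  set preP := finPieces GTId.sel fun j => (pre j).flatMap (selBlock G j)
  set startP := finPieces GTId.sel fun j => selStart G j (v j)
  set checkP := finPieces GTId.checker (checkerThread (α := α))
  set finishP := finPieces GTId.sel fun j => selFinish G j (v j)
  set postP := finPieces GTId.sel fun j => (post j).flatMap (selBlock G j)
  have hinit : pieceCost (reductionSchedule G v pre post) =
      pieceCost (preP ++ (startP ++ (checkP ++ (finishP ++ postP)))) :=
    pieceCost_append_of_disjoint (P := [_]) _ (by simp) (by simp [finPieces])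
  have hcheck : pieceCost (checkP ++ (finishP ++ postP)) = pieceCost (finishP ++ postP) :=
    pieceCost_append_of_disjoint _ (nodup_map_fst_finPieces (fun _ _ h => GTId.checker.inj h) _)
      (by simp [checkP, finishP, postP, finPieces])
  have hpost : pieceCost postP = 0 := by
    simpa [pieceCost] using pieceCost_append_of_disjoint []
      (nodup_map_fst_finPieces (fun _ _ h => GTId.sel.inj h) _) (by simp)
  have hpre := pieceCost_append_le preP (startP ++ (checkP ++ (finishP ++ postP)))
  have hstart := pieceCost_append_le startP (checkP ++ (finishP ++ postP))
  have hfinish := pieceCost_append_le finishP postP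
  have hlen : preP.length = k ∧ startP.length = k ∧ finishP.length = k :=
    ⟨length_finPieces _ _, length_finPieces _ _, length_finPieces _ _⟩
  omega

end Reduction

/-- if `G` has an independent set of size `k`, then `P_G` has an SC
interleaving with at most `3k` preemptions. -/
theorem stmt11 (G : SimpleGraph α) [DecidableRel G.Adj] (k : ℕ)
    (I : Finset α) (hcard : I.card = k)
    (hind : ∀ a ∈ I, ∀ b ∈ I, ¬ G.Adj a b) :
    ∃ σ : List (GTId k × Event (GVar α k)),
      IsInterleaving (pgThreads G k) σ ∧
      SC (σ.map Prod.snd) ∧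
      numPreemptions σ ≤ 3 * k := by
  subst hcard
  let v : Fin I.card → α := fun j => I.equivFin.symm j
  have hv : Function.Injective v := Subtype.val_injective.comp I.equivFin.symm.injective
  have hdis : Pairwise fun i j => (incEdges G (v i)).Disjoint (incEdges G (v j)) :=
    fun i j hij => incEdges_disjoint (hv.ne hij)
      (hind _ (I.equivFin.symm i).2 _ (I.equivFin.symm j).2)
  choose pre post hsplit using fun j =>
    List.append_of_mem (Finset.mem_toList.mpr (Finset.mem_univ (v j)))
  exact ⟨flattenPieces (reductionSchedule G v pre post), isInterleaving_reductionSchedule hsplit,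
    sc_reductionSchedule hdis pre post,
    (numPreemptions_flattenPieces_le _).trans (pieceCost_reductionSchedule_le pre post)⟩
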